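/- arXiv:1306.5495 — 3 statements merged into one kernel-verified Lean document; each statement's English description precedes it below -/
import Mathlib

section
/- Let K be an algebraically closed field and let A be an algebraic ring over K (an affine algebraic variety with regular addition and multiplication maps making it an associative unital ring). Then the group of units A^× is a nonempty principal open subset of A, and the inversion map A^× → A^×, t ↦ t^{-1}, is regular, so (A^×, ·) is an algebraic group. -/
open MvPolynomial

/-- A map `𝔸ⁿ → 𝔸ᵐ` is a polynomial (regular) map if each coordinate is given by a
polynomial. -/
def IsPolyMap {K : Type*} [Field K] {n m : ℕ} (f : (Fin n → K) → (Fin m → K)) : Prop :=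
  ∀ j : Fin m, ∃ p : MvPolynomial (Fin n) K, ∀ x, f x j = eval x p

/-- A two-variable polynomial (regular) map `𝔸ⁿ × 𝔸ⁿ → 𝔸ᵐ`. -/
def IsPolyMap₂ {K : Type*} [Field K] {n m : ℕ}
    (f : (Fin n → K) → (Fin n → K) → (Fin m → K)) : Prop :=
  ∀ j : Fin m, ∃ p : MvPolynomial (Fin n ⊕ Fin n) K,
    ∀ x y, f x y j = eval (Sum.elim x y) p

/-- An (affine) algebraic subset of `𝔸ⁿ`: the common zero locus of a family of
polynomials. -/
def IsAlgebraicSet {K : Type*} [Field K] {n : ℕ} (S : Set (Fin n → K)) : Prop :=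
  ∃ E : Set (MvPolynomial (Fin n) K), S = {x | ∀ p ∈ E, eval x p = 0}

/-- The Zariski topology on affine `n`-space over `K`. -/
def zariskiTop (K : Type*) [Field K] (n : ℕ) : TopologicalSpace (Fin n → K) :=
  TopologicalSpace.generateFrom
    {U | ∃ p : MvPolynomial (Fin n) K, U = {x | eval x p ≠ 0}}

/-- A map defined on a subset `S ⊆ 𝔸ⁿ` is regular on `S` if at each point of `S` it is
locally a ratio of polynomials. -/
def IsRegularOn {K : Type*} [Field K] {n m : ℕ} (S : Set (Fin n → K))
    (f : (Fin n → K) → (Fin m → K)) : Prop :=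
  ∀ x ∈ S, ∀ j : Fin m, ∃ p q : MvPolynomial (Fin n) K,
    eval x q ≠ 0 ∧ ∀ y ∈ S, eval y q ≠ 0 → eval y q * f y j = eval y p

/-- An algebraic ring over `K`: an affine algebraic set together with regular
(polynomial) addition, negation, and multiplication maps making it an associative
unital ring. -/
structure AlgebraicRing (K : Type*) [Field K] where
  n : ℕ
  carrier : Set (Fin n → K)
  carrier_closed : IsAlgebraicSet carrier
  add : (Fin n → K) → (Fin n → K) → (Fin n → K)
  mul : (Fin n → K) → (Fin n → K) → (Fin n → K)
  neg : (Fin n → K) → (Fin n → K)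
  zero : Fin n → K
  one : Fin n → K
  add_poly : IsPolyMap₂ add
  mul_poly : IsPolyMap₂ mul
  neg_poly : IsPolyMap neg
  zero_mem : zero ∈ carrier
  one_mem : one ∈ carrier
  add_mem : ∀ ⦃x y⦄, x ∈ carrier → y ∈ carrier → add x y ∈ carrier
  mul_mem : ∀ ⦃x y⦄, x ∈ carrier → y ∈ carrier → mul x y ∈ carrier
  neg_mem : ∀ ⦃x⦄, x ∈ carrier → neg x ∈ carrier
  add_assoc' : ∀ x ∈ carrier, ∀ y ∈ carrier, ∀ z ∈ carrier,
    add (add x y) z = add x (add y z)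
  add_comm' : ∀ x ∈ carrier, ∀ y ∈ carrier, add x y = add y x
  zero_add' : ∀ x ∈ carrier, add zero x = x
  add_zero' : ∀ x ∈ carrier, add x zero = x
  neg_add_cancel' : ∀ x ∈ carrier, add (neg x) x = zero
  mul_assoc' : ∀ x ∈ carrier, ∀ y ∈ carrier, ∀ z ∈ carrier,
    mul (mul x y) z = mul x (mul y z)
  one_mul' : ∀ x ∈ carrier, mul one x = x
  mul_one' : ∀ x ∈ carrier, mul x one = x
  zero_mul' : ∀ x ∈ carrier, mul zero x = zero
  mul_zero' : ∀ x ∈ carrier, mul x zero = zero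
  left_distrib' : ∀ x ∈ carrier, ∀ y ∈ carrier, ∀ z ∈ carrier,
    mul x (add y z) = add (mul x y) (mul x z)
  right_distrib' : ∀ x ∈ carrier, ∀ y ∈ carrier, ∀ z ∈ carrier,
    mul (add x y) z = add (mul x z) (mul y z)

namespace AlgebraicRing

variable {K : Type*} [Field K]

/-- The Zariski topology on (the points of) an algebraic ring. -/
instance (A : AlgebraicRing K) : TopologicalSpace A.carrier :=
  TopologicalSpace.induced Subtype.val (zariskiTop K A.n)

/-- The set of (two-sided) units of an algebraic ring. -/
def units (A : AlgebraicRing K) : Set (Fin A.n → K) :=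
  {x | x ∈ A.carrier ∧ ∃ y ∈ A.carrier, A.mul x y = A.one ∧ A.mul y x = A.one}

end AlgebraicRing

/-!
Let `ρ x f = f (· * x)` be right translation of functions on `A`. The span `V` of all translates
of the coordinate functions is `ρ`-stable, and it is finite-dimensional: the translate of the
polynomial function `F` by `x` is `c ↦ (comul F) (c, x)`, a combination of the finitely many
monomials in `c` occurring in `comul F`, with coefficients polynomial in `x`. For the same reason
the matrix of `ρ x` on `V` has entries polynomial in `x`. As `x j = (ρ x (coord j)) 1`, the
representation `ρ` is faithful.

A unit `x` gives an invertible `ρ x`, so `det (ρ x) ≠ 0`. Conversely, if `det (ρ x) ≠ 0` then the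
coordinate functions lie in the image of `ρ x`, so `c ↦ c * x` is injective on `A`; by
Ax–Grothendieck it is surjective, giving `y * x = 1`, and then `ρ (x * y) = 1` forces `x * y = 1`.
So `A^×` is the principal open set `det (ρ x) ≠ 0`, and by Cramer's rule the coordinates of the
inverse are polynomials divided by `det (ρ x)`.
-/

namespace MvPolynomial

variable {R σ τ : Type*} [CommSemiring R]

theorem eval_sumElim_eq_eval_map_sumAlgEquiv (G : MvPolynomial (σ ⊕ τ) R) (c : σ → R)
    (x : τ → R) : eval (Sum.elim c x) G = eval c (map (eval x) (sumAlgEquiv R σ τ G)) := by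
  induction G using MvPolynomial.induction_on with
  | C a => simp [sumAlgEquiv_C_inl]
  | add p q hp hq => simp [hp, hq]
  | mul_X p i h => cases i <;> simp [h, sumAlgEquiv_X_inl, sumAlgEquiv_X_inr]

theorem map_mem_restrictSupport_support {S : Type*} [CommSemiring S] (f : S →+* R)
    (H : MvPolynomial σ S) : map f H ∈ restrictSupport R (H.support : Set (σ →₀ ℕ)) :=
  (mem_restrictSupport_iff R).2 (Finset.coe_subset.2 (support_map_subset f H))

theorem exists_linearMap_map_eval_eq_eval (L : MvPolynomial σ R →ₗ[R] R)
    (H : MvPolynomial σ (MvPolynomial τ R)) :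
    ∃ P : MvPolynomial τ R, ∀ x, L (map (eval x) H) = eval x P := by
  induction H using MvPolynomial.induction_on' with
  | monomial β a =>
    refine ⟨a * C (L (monomial β 1)), fun x => ?_⟩
    rw [map_monomial, ← mul_one (eval x a), ← smul_eq_mul, ← smul_monomial, map_smul,
      smul_eq_mul, map_mul, eval_C]
  | add p q hp hq =>
    obtain ⟨P, hP⟩ := hp
    obtain ⟨Q, hQ⟩ := hq
    exact ⟨P + Q, fun x => by simp [hP, hQ]⟩

instance {K : Type*} [Field K] (s : Finset (σ →₀ ℕ)) :
    FiniteDimensional K (restrictSupport K (s : Set (σ →₀ ℕ))) := by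
  rw [restrictSupport_eq_span]
  exact FiniteDimensional.span_of_finite K (s.finite_toSet.image _)

end MvPolynomial

theorem Matrix.exists_linearMap_map_eval_eq_eval {R ι τ : Type*} [CommSemiring R] [Fintype ι]
    [DecidableEq ι] (Φ : Matrix ι ι R →ₗ[R] R) (Q : Matrix ι ι (MvPolynomial τ R)) :
    ∃ P : MvPolynomial τ R, ∀ x, Φ (Q.map (eval x)) = eval x P := by
  induction Q using Matrix.induction_on' with
  | h_zero => exact ⟨0, fun x => by simp⟩
  | h_add p q hp hq =>
    obtain ⟨P, hP⟩ := hp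
    obtain ⟨Q, hQ⟩ := hq
    exact ⟨P + Q, fun x => by simp [Matrix.map_add, hP, hQ]⟩
  | h_std_basis k i a =>
    refine ⟨a * C (Φ (Matrix.single k i 1)), fun x => ?_⟩
    rw [Matrix.map_single, ← mul_one (eval x a), ← smul_eq_mul, ← Matrix.smul_single, map_smul,
      smul_eq_mul, map_mul, eval_C]

namespace AlgebraicRing

variable {K : Type*} [Field K] (A : AlgebraicRing K)

instance : Monoid A.carrier where
  mul x y := ⟨A.mul x y, A.mul_mem x.2 y.2⟩
  one := ⟨A.one, A.one_mem⟩
  mul_assoc x y z := Subtype.ext (A.mul_assoc' _ x.2 _ y.2 _ z.2)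
  one_mul x := Subtype.ext (A.one_mul' _ x.2)
  mul_one x := Subtype.ext (A.mul_one' _ x.2)

@[simp]
theorem coe_mul (x y : A.carrier) : ((x * y : A.carrier) : Fin A.n → K) = A.mul x y := rfl

@[simp]
theorem coe_one : ((1 : A.carrier) : Fin A.n → K) = A.one := rfl

theorem mem_units_iff {x : Fin A.n → K} :
    x ∈ A.units ↔ ∃ hx : x ∈ A.carrier, IsUnit (⟨x, hx⟩ : A.carrier) := by
  simp only [units, isUnit_iff_exists, Subtype.ext_iff, coe_mul, coe_one, Subtype.exists,
    exists_prop, Set.mem_ofPred_eq]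

theorem exists_carrier_eq_zeroLocus : ∃ I : Ideal (MvPolynomial (Fin A.n) K),
    A.carrier = zeroLocus K I := by
  obtain ⟨E, hE⟩ := A.carrier_closed
  exact ⟨Ideal.span E, by rw [zeroLocus_span, hE]; rfl⟩

noncomputable def mulPoly (j : Fin A.n) : MvPolynomial (Fin A.n ⊕ Fin A.n) K :=
  (A.mul_poly j).choose

theorem eval_mulPoly (x y : Fin A.n → K) (j : Fin A.n) :
    eval (Sum.elim x y) (A.mulPoly j) = A.mul x y j :=
  ((A.mul_poly j).choose_spec x y).symm

/-- The comultiplication `F ↦ ((c, x) ↦ F (c * x))` of the coordinate ring, with the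
variables `x` in the coefficients. -/
noncomputable def comul (F : MvPolynomial (Fin A.n) K) :
    MvPolynomial (Fin A.n) (MvPolynomial (Fin A.n) K) :=
  sumAlgEquiv K _ _ (bind₁ A.mulPoly F)

theorem eval_map_eval_comul (F : MvPolynomial (Fin A.n) K) (c x : Fin A.n → K) :
    eval c (map (eval x) (A.comul F)) = eval (A.mul c x) F := by
  rw [comul, ← eval_sumElim_eq_eval_map_sumAlgEquiv, eval, eval₂Hom_bind₁]
  exact congrArg (fun y => eval y F) (funext (A.eval_mulPoly c x))

noncomputable def polyFn : MvPolynomial (Fin A.n) K →ₗ[K] (A.carrier → K) where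
  toFun F c := eval (c : Fin A.n → K) F
  map_add' F G := by ext; simp
  map_smul' a F := by ext; simp

def coord (j : Fin A.n) : A.carrier → K := fun c => (c : Fin A.n → K) j

theorem polyFn_X (j : Fin A.n) : A.polyFn (X j) = A.coord j := by
  ext c; simp [polyFn, coord]

def rightTranslation : A.carrier →* Module.End K (A.carrier → K) where
  toFun x := LinearMap.funLeft K K (· * x)
  map_one' := by ext f c; simp [LinearMap.funLeft_apply]
  map_mul' x y := by ext f c; simp [LinearMap.funLeft_apply, mul_assoc]

theorem rightTranslation_apply (x : A.carrier) (f : A.carrier → K) (c : A.carrier) :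
    A.rightTranslation x f c = f (c * x) := rfl

theorem rightTranslation_polyFn (x : A.carrier) (F : MvPolynomial (Fin A.n) K) :
    A.rightTranslation x (A.polyFn F) =
      A.polyFn (map (eval (x : Fin A.n → K)) (A.comul F)) := by
  ext c
  exact (A.eval_map_eval_comul F c x).symm

def translationSpace : Submodule K (A.carrier → K) :=
  Submodule.span K
    (Set.range fun p : A.carrier × Fin A.n => A.rightTranslation p.1 (A.coord p.2))

theorem coord_mem_translationSpace (j : Fin A.n) : A.coord j ∈ A.translationSpace :=
  Submodule.subset_span ⟨(1, j), by simp⟩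

theorem rightTranslation_mem_translationSpace (x : A.carrier) {f : A.carrier → K}
    (hf : f ∈ A.translationSpace) : A.rightTranslation x f ∈ A.translationSpace := by
  have : A.translationSpace.map (A.rightTranslation x) ≤ A.translationSpace := by
    rw [translationSpace, Submodule.map_span_le]
    rintro _ ⟨⟨z, j⟩, rfl⟩
    rw [← Module.End.mul_apply, ← map_mul]
    exact Submodule.subset_span ⟨(x * z, j), rfl⟩
  exact this (Submodule.mem_map_of_mem hf)

theorem translationSpace_le_map_polyFn : A.translationSpace ≤
    (restrictSupport K ↑(Finset.univ.biUnion fun j => (A.comul (X j)).support)).map A.polyFn := by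
  rw [translationSpace, Submodule.span_le]
  rintro _ ⟨⟨z, j⟩, rfl⟩
  refine ⟨_, restrictSupport_mono K ?_ (map_mem_restrictSupport_support _ _),
    (A.rightTranslation_polyFn z (X j)).symm.trans (by rw [polyFn_X])⟩
  exact Finset.coe_subset.2
    (Finset.subset_biUnion_of_mem (fun j => (A.comul (X j)).support) (Finset.mem_univ j))

instance : FiniteDimensional K A.translationSpace :=
  Submodule.finiteDimensional_of_le A.translationSpace_le_map_polyFn

def translationRep : A.carrier →* Module.End K A.translationSpace where
  toFun x := (A.rightTranslation x).restrict fun _ => A.rightTranslation_mem_translationSpace x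
  map_one' := by ext f; simp
  map_mul' x y := by ext f; simp

theorem coe_translationRep_apply (x : A.carrier) (f : A.translationSpace) :
    (A.translationRep x f : A.carrier → K) = A.rightTranslation x f := rfl

def coordFunctional (j : Fin A.n) : Module.End K A.translationSpace →ₗ[K] K :=
  LinearMap.proj 1 ∘ₗ A.translationSpace.subtype ∘ₗ
    LinearMap.applyₗ ⟨A.coord j, A.coord_mem_translationSpace j⟩

theorem coordFunctional_translationRep (x : A.carrier) (j : Fin A.n) :
    A.coordFunctional j (A.translationRep x) = (x : Fin A.n → K) j := by
  simp [coordFunctional, coe_translationRep_apply, rightTranslation_apply, coord]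

theorem translationRep_injective : Function.Injective A.translationRep := fun x y h =>
  Subtype.ext <| funext fun j => by
    rw [← coordFunctional_translationRep, h, coordFunctional_translationRep]

theorem exists_linearMap_rightTranslation_eq_eval (ℓ : (A.carrier → K) →ₗ[K] K)
    {f : A.carrier → K} (hf : f ∈ A.translationSpace) : ∃ P : MvPolynomial (Fin A.n) K,
      ∀ x : A.carrier, ℓ (A.rightTranslation x f) = eval (x : Fin A.n → K) P := by
  obtain ⟨F, -, rfl⟩ := A.translationSpace_le_map_polyFn hf
  obtain ⟨P, hP⟩ := exists_linearMap_map_eval_eq_eval (ℓ ∘ₗ A.polyFn) (A.comul F)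
  exact ⟨P, fun x => by rw [rightTranslation_polyFn, ← hP]; rfl⟩

theorem exists_map_eval_eq_toMatrix_translationRep {ι : Type*} [Fintype ι] [DecidableEq ι]
    (b : Module.Basis ι K A.translationSpace) :
    ∃ Q : Matrix ι ι (MvPolynomial (Fin A.n) K), ∀ x : A.carrier,
      Q.map (eval (x : Fin A.n → K)) = LinearMap.toMatrix b b (A.translationRep x) := by
  have entry (k i : ι) : ∃ P : MvPolynomial (Fin A.n) K, ∀ x : A.carrier,
      eval (x : Fin A.n → K) P = LinearMap.toMatrix b b (A.translationRep x) k i := by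
    obtain ⟨ℓ, hℓ⟩ := LinearMap.exists_extend (b.coord k)
    obtain ⟨P, hP⟩ := A.exists_linearMap_rightTranslation_eq_eval ℓ (b i).2
    refine ⟨P, fun x => ?_⟩
    rw [LinearMap.toMatrix_apply, ← hP, ← b.coord_apply, ← hℓ]
    rfl
  choose Q hQ using entry
  exact ⟨Matrix.of Q, fun x => Matrix.ext fun k i => hQ k i x⟩

theorem exists_eval_eq_det_translationRep : ∃ P : MvPolynomial (Fin A.n) K,
    ∀ x : A.carrier, eval (x : Fin A.n → K) P = LinearMap.det (A.translationRep x) := by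
  let b := Module.finBasis K A.translationSpace
  obtain ⟨Q, hQ⟩ := A.exists_map_eval_eq_toMatrix_translationRep b
  refine ⟨Q.det, fun x => ?_⟩
  rw [← LinearMap.det_toMatrix b, ← hQ, RingHom.map_det, RingHom.mapMatrix_apply]

theorem exists_det_mul_coord_eq_eval_of_mul_eq_one (j : Fin A.n) :
    ∃ P : MvPolynomial (Fin A.n) K, ∀ x w : A.carrier, w * x = 1 →
      LinearMap.det (A.translationRep x) * (w : Fin A.n → K) j = eval (x : Fin A.n → K) P := by
  let b := Module.finBasis K A.translationSpace
  obtain ⟨Q, hQ⟩ := A.exists_map_eval_eq_toMatrix_translationRep b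
  obtain ⟨P, hP⟩ := Q.adjugate.exists_linearMap_map_eval_eq_eval
    (A.coordFunctional j ∘ₗ (Matrix.toLin b b).toLinearMap)
  refine ⟨P, fun x w hwx => ?_⟩
  set M := LinearMap.toMatrix b b (A.translationRep x)
  set N := LinearMap.toMatrix b b (A.translationRep w)
  have hNM : N * M = 1 := by
    rw [← LinearMap.toMatrix_mul, ← map_mul, hwx, map_one, LinearMap.toMatrix_one]
  have cramer : M.det • N = Q.adjugate.map (eval (x : Fin A.n → K)) :=
    calc M.det • N = N * (M * M.adjugate) := by
          rw [Matrix.mul_adjugate, Matrix.mul_smul, Matrix.mul_one]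
      _ = M.adjugate := by rw [← Matrix.mul_assoc, hNM, Matrix.one_mul]
      _ = Q.adjugate.map (eval (x : Fin A.n → K)) := by
          rw [← RingHom.mapMatrix_apply, RingHom.map_adjugate, RingHom.mapMatrix_apply, hQ]
  rw [← hP, ← cramer, ← LinearMap.det_toMatrix b, ← coordFunctional_translationRep,
    LinearMap.comp_apply, LinearEquiv.coe_coe, map_smul, map_smul, Matrix.toLin_toMatrix,
    smul_eq_mul]

theorem exists_mul_eq_one_of_injective_mul_right [IsAlgClosed K] (x : A.carrier)
    (hx : Function.Injective fun c : A.carrier => c * x) : ∃ y : A.carrier, y * x = 1 := by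
  obtain ⟨I, hI⟩ := A.exists_carrier_eq_zeroLocus
  have hmul : (fun v i => eval v (map (eval (x : Fin A.n → K)) (A.comul (X i)))) =
      fun v => A.mul v x := by
    funext v i
    rw [eval_map_eval_comul, eval_X]
  have surj := ax_grothendieck_zeroLocus I fun i => map (eval (x : Fin A.n → K)) (A.comul (X i))
  simp only [hmul, ← hI] at surj
  obtain ⟨y, hy, hyx⟩ := surj (fun v hv => A.mul_mem hv x.2)
    (fun v hv v' hv' h => congrArg Subtype.val (@hx ⟨v, hv⟩ ⟨v', hv'⟩ (Subtype.ext h))) A.one_mem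
  exact ⟨⟨y, hy⟩, Subtype.ext hyx⟩

theorem injective_mul_right_of_det_ne_zero {x : A.carrier}
    (hx : LinearMap.det (A.translationRep x) ≠ 0) :
    Function.Injective fun c : A.carrier => c * x := by
  have surj : Function.Surjective (A.translationRep x) :=
    ((Module.End.isUnit_iff _).1 ((LinearMap.isUnit_iff_isUnit_det _).2 hx.isUnit)).2
  intro c c' hcc'
  refine Subtype.ext (funext fun j => ?_)
  obtain ⟨g, hg⟩ := surj ⟨A.coord j, A.coord_mem_translationSpace j⟩
  have hcoord : A.coord j = A.rightTranslation x g := by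
    rw [← coe_translationRep_apply, hg]
  change A.coord j c = A.coord j c'
  rw [hcoord, rightTranslation_apply, rightTranslation_apply]
  exact congrArg (g : A.carrier → K) hcc'

theorem isUnit_iff_det_translationRep_ne_zero [IsAlgClosed K] (x : A.carrier) :
    IsUnit x ↔ LinearMap.det (A.translationRep x) ≠ 0 := by
  refine ⟨fun hx => (hx.map (LinearMap.det.comp A.translationRep)).ne_zero, fun hx => ?_⟩
  obtain ⟨y, hyx⟩ := A.exists_mul_eq_one_of_injective_mul_right x
    (A.injective_mul_right_of_det_ne_zero hx)
  have hxy : A.translationRep (x * y) = A.translationRep 1 := by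
    rw [map_mul, map_one, mul_eq_one_comm, ← map_mul, hyx, map_one]
  exact isUnit_iff_exists.2 ⟨y, A.translationRep_injective hxy, hyx⟩

open Classical in
noncomputable def inv (x : Fin A.n → K) : Fin A.n → K :=
  if hx : x ∈ A.units then hx.2.choose else x

theorem inv_spec {x : Fin A.n → K} (hx : x ∈ A.units) :
    A.inv x ∈ A.units ∧ A.mul x (A.inv x) = A.one ∧ A.mul (A.inv x) x = A.one := by
  obtain ⟨hinv, hxinv, hinvx⟩ := hx.2.choose_spec
  rw [inv, dif_pos hx]
  exact ⟨⟨hinv, x, hx.1, hinvx, hxinv⟩, hxinv, hinvx⟩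

end AlgebraicRing

/-- For an algebraic ring `A` over an algebraically closed field `K`,
the set of units `A^×` is a nonempty principal open subset of `A`, and inversion is a
regular map on it (so `(A^×, ·)` is an algebraic group). -/
theorem units_principalOpen_and_inversion_regular (K : Type*) [Field K] [IsAlgClosed K]
    (A : AlgebraicRing K) :
    A.units.Nonempty ∧
    (∃ p : MvPolynomial (Fin A.n) K, A.units = {x ∈ A.carrier | eval x p ≠ 0}) ∧
    ∃ inv : (Fin A.n → K) → (Fin A.n → K),
      (∀ x ∈ A.units,
        inv x ∈ A.units ∧ A.mul x (inv x) = A.one ∧ A.mul (inv x) x = A.one) ∧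
      IsRegularOn A.units inv := by
  obtain ⟨P, hP⟩ := A.exists_eval_eq_det_translationRep
  have units_eq : A.units = {x ∈ A.carrier | eval x P ≠ 0} := by
    ext x
    rw [A.mem_units_iff, Set.mem_ofPred_eq, ← exists_prop]
    exact exists_congr fun hx => by rw [hP ⟨x, hx⟩, A.isUnit_iff_det_translationRep_ne_zero]
  refine ⟨⟨A.one, A.mem_units_iff.2 ⟨A.one_mem, isUnit_one⟩⟩, ⟨P, units_eq⟩, A.inv,
    fun x hx => A.inv_spec hx, fun x hx j => ?_⟩
  obtain ⟨Pj, hPj⟩ := A.exists_det_mul_coord_eq_eval_of_mul_eq_one j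
  refine ⟨Pj, P, (units_eq ▸ hx).2, fun y hy _ => ?_⟩
  obtain ⟨hinv, -, hinvy⟩ := A.inv_spec hy
  rw [hP ⟨y, hy.1⟩]
  exact hPj ⟨y, hy.1⟩ ⟨A.inv y, hinv.1⟩ (Subtype.ext hinvy)
end

section
/- Let A be a connected algebraic ring over an algebraically closed field K (i.e., an algebraic ring whose underlying variety is irreducible). Then every element of A is a difference of two units: A = A^× − A^×. In particular, A is generated as a ring by its units. -/
open MvPolynomial

/-
If `D` is a polynomial with `D(1) ≠ 0` that is nonzero only at units, then for any `x` the
Zariski-open sets `{D ≠ 0}` and `{v | D(v + x) ≠ 0}` both meet `A` (at `1` and at `1 - x`), so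
by irreducibility they share a point `v` of `A`, and `x = (v + x) - v` with `v`, `v + x` units.

Such a `D` exists because invertibility of the right translation `y ↦ y x` is detected by a
determinant. Its comorphism `θₓ` on the coordinate ring `K[A]` satisfies `θₓ ∘ θ_w = θ_{xw}`,
so the span `V` of all `θ_w(Xⱼ)` is stable under every `θₓ`; it is finite-dimensional and the
matrix of `θₓ` on `V` depends polynomially on `x`. Where its determinant `D(x)` is nonzero,
`θₓ` maps onto the generators `Xⱼ ∈ V`, hence is surjective, hence bijective since `K[A]` is
Noetherian, and a bijective comorphism makes `y ↦ y x` bijective on `A`.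
-/

open Function Set MvPolynomial

noncomputable section

theorem RingHom.injective_of_surjective_of_isNoetherianRing {R : Type*} [CommRing R]
    [IsNoetherianRing R] (f : R →+* R) (hf : Surjective f) : Injective f := by
  have hpow : ∀ k a, (f ^ (k + 1)) a = f ((f ^ k) a) := fun k a => by
    rw [pow_succ', RingHom.mul_def, RingHom.comp_apply]
  have hmono : Monotone fun k => RingHom.ker (f ^ k) :=
    monotone_nat_of_le_succ fun k a ha => by
      rw [RingHom.mem_ker, hpow, RingHom.mem_ker.mp ha, map_zero]
  obtain ⟨N, hN⟩ := monotone_stabilizes_iff_noetherian.mpr inferInstance ⟨_, hmono⟩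
  rw [injective_iff_map_eq_zero]
  intro a ha
  obtain ⟨b, rfl⟩ := (RingHom.coe_pow f N ▸ hf.iterate N) a
  have hb : b ∈ RingHom.ker (f ^ (N + 1)) := by
    rw [RingHom.mem_ker, hpow, ha]
  have hN' : RingHom.ker (f ^ N) = RingHom.ker (f ^ (N + 1)) := hN (N + 1) N.le_succ
  rw [← hN'] at hb
  exact hb

theorem exists_eval_eq_det_restrict {K σ ι W : Type*} [Field K] [AddCommGroup W] [Module K W]
    (pt : ι → σ → K) (f : ι → W →ₗ[K] W) (V : Submodule K W) [FiniteDimensional K V]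
    (hV : ∀ i, ∀ v ∈ V, f i v ∈ V)
    (hpoly : ∀ v ∈ V, ∀ ℓ : W →ₗ[K] K, ∃ Q : MvPolynomial σ K, ∀ i, ℓ (f i v) = eval (pt i) Q) :
    ∃ D : MvPolynomial σ K, ∀ i, eval (pt i) D = LinearMap.det ((f i).restrict (hV i)) := by
  let b := Module.finBasis K V
  have hentry : ∀ l l', ∃ Q : MvPolynomial σ K,
      ∀ i, b.coord l ((f i).restrict (hV i) (b l')) = eval (pt i) Q := fun l l' => by
    obtain ⟨ℓ, hℓ⟩ := LinearMap.exists_extend (b.coord l)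
    obtain ⟨Q, hQ⟩ := hpoly _ (b l').2 ℓ
    exact ⟨Q, fun i => by rw [← hQ i, ← hℓ]; rfl⟩
  choose E hE using hentry
  refine ⟨(Matrix.of E).det, fun i => ?_⟩
  rw [← LinearMap.det_toMatrix b, RingHom.map_det]
  congr 1
  ext l l'
  rw [RingHom.mapMatrix_apply, Matrix.map_apply, Matrix.of_apply, ← hE, LinearMap.toMatrix_apply]
  rfl

theorem exists_poly_surjective_of_eval_ne_zero {K σ R ι T : Type*} [Field K] [CommRing R]
    [Algebra K R] {t : ι → R} (ht : Algebra.adjoin K (range t) = ⊤) (pt : T → σ → K)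
    (θ : T → R →ₐ[K] R) (e : T) (hθe : θ e = AlgHom.id K R)
    (hcomp : ∀ x w, ∃ u, (θ x).comp (θ w) = θ u)
    (hfin : ∃ W : Submodule K R, FiniteDimensional K W ∧ ∀ x i, θ x (t i) ∈ W)
    (hpoly : ∀ v (ℓ : R →ₗ[K] K), ∃ Q : MvPolynomial σ K, ∀ x, ℓ (θ x v) = eval (pt x) Q) :
    ∃ D : MvPolynomial σ K, eval (pt e) D ≠ 0 ∧ ∀ x, eval (pt x) D ≠ 0 → Surjective (θ x) := by
  obtain ⟨W, hWfin, hW⟩ := hfin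
  let V := Submodule.span K (range fun p : T × ι => θ p.1 (t p.2))
  have : FiniteDimensional K V :=
    Submodule.finiteDimensional_of_le <|
      Submodule.span_le.mpr (range_subset_iff.mpr fun p => hW p.1 p.2)
  have htV : ∀ i, t i ∈ V := fun i => Submodule.subset_span ⟨(e, i), by simp [hθe]⟩
  have hV : ∀ x, ∀ v ∈ V, θ x v ∈ V := by
    intro x v hv
    induction hv using Submodule.span_induction with
    | mem r hr =>
      obtain ⟨⟨w, i⟩, rfl⟩ := hr
      obtain ⟨u, hu⟩ := hcomp x w
      exact Submodule.subset_span ⟨(u, i), by simp [← hu]⟩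
    | zero => simp
    | add a b _ _ ha hb => simpa using V.add_mem ha hb
    | smul c a _ ha => simpa using V.smul_mem c ha
  obtain ⟨D, hD⟩ := exists_eval_eq_det_restrict pt (fun x => (θ x).toLinearMap) V hV
    fun v _ ℓ => hpoly v ℓ
  refine ⟨D, ?_, fun x hx => ?_⟩
  · have hid : (θ e).toLinearMap.restrict (hV e) = LinearMap.id :=
      LinearMap.ext fun v => Subtype.ext (by simp [hθe])
    rw [hD e, hid, LinearMap.det_id]
    exact one_ne_zero
  · have hsurj : Surjective ((θ x).toLinearMap.restrict (hV x)) :=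
      (Module.End.isUnit_iff _).mp ((LinearMap.isUnit_iff_isUnit_det _).mpr
        (hD x ▸ isUnit_iff_ne_zero.mpr hx)) |>.2
    rw [← AlgHom.range_eq_top, eq_top_iff, ← ht, Algebra.adjoin_le_iff]
    rintro _ ⟨i, rfl⟩
    obtain ⟨v, hv⟩ := hsurj ⟨t i, htV i⟩
    exact ⟨v, congrArg Subtype.val hv⟩

namespace MvPolynomial

variable {K : Type*} [Field K] {σ τ : Type*} {n : ℕ}

def polyMap {ι : Type*} (Q : ι → MvPolynomial σ K) (y : σ → K) : ι → K :=
  fun j => eval y (Q j)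

theorem eval_bind₁_eq_eval_polyMap {ι : Type*} (Q : ι → MvPolynomial σ K)
    (p : MvPolynomial ι K) (y : σ → K) :
    eval y (bind₁ Q p) = eval (polyMap Q y) p :=
  eval₂Hom_bind₁ (RingHom.id K) y Q p

def partialEval (x : τ → K) : MvPolynomial (σ ⊕ τ) K →ₐ[K] MvPolynomial σ K :=
  aeval (Sum.elim X (C ∘ x))

theorem eval_partialEval (x : τ → K) (y : σ → K) (P : MvPolynomial (σ ⊕ τ) K) :
    eval y (partialEval x P) = eval (Sum.elim y x) P := by
  rw [partialEval, aeval_eq_bind₁, eval_bind₁_eq_eval_polyMap]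
  congr
  funext i
  rcases i with i | i <;> simp [polyMap]

theorem bind₁_partialEval {ι : Type*} (x : τ → K) (P : ι → MvPolynomial (σ ⊕ τ) K)
    (p : MvPolynomial ι K) :
    bind₁ (fun j => partialEval x (P j)) p = partialEval x (bind₁ P p) := by
  rw [partialEval, aeval_bind₁, aeval_eq_bind₁]
  rfl

theorem partialEval_eq_sum (x : τ → K) (P : MvPolynomial (σ ⊕ τ) K) :
    partialEval x P = ∑ d ∈ (sumAlgEquiv K σ τ P).support,
      C (eval x ((sumAlgEquiv K σ τ P).coeff d)) * monomial d 1 := by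
  have hfactor : ((partialEval x).toRingHom : MvPolynomial (σ ⊕ τ) K →+* MvPolynomial σ K) =
      (map (eval x)).comp (sumAlgEquiv K σ τ).toRingEquiv.toRingHom := by
    ext i
    · simp [partialEval]
    · rcases i with i | i <;> simp [partialEval, sumAlgEquiv_X_inl, sumAlgEquiv_X_inr]
  change (partialEval x).toRingHom P = _
  rw [hfactor]
  change map (eval x) (sumAlgEquiv K σ τ P) = _
  conv_lhs => rw [(sumAlgEquiv K σ τ P).as_sum, map_sum]
  simp [map_monomial, C_mul_monomial]

theorem partialEval_mem_restrictSupport (x : τ → K) (P : MvPolynomial (σ ⊕ τ) K) :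
    partialEval x P ∈ restrictSupport K ↑(sumAlgEquiv K σ τ P).support := by
  rw [partialEval_eq_sum]
  refine Submodule.sum_mem _ fun d hd => ?_
  rw [C_mul_monomial, mul_one]
  exact (monomial_mem_restrictSupport K).mpr (Or.inl hd)

theorem exists_eval_eq_linearMap_partialEval (P : MvPolynomial (σ ⊕ τ) K)
    (ℓ : MvPolynomial σ K →ₗ[K] K) :
    ∃ F : MvPolynomial τ K, ∀ x, ℓ (partialEval x P) = eval x F := by
  refine ⟨∑ d ∈ (sumAlgEquiv K σ τ P).support,
    (sumAlgEquiv K σ τ P).coeff d * C (ℓ (monomial d 1)), fun x => ?_⟩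
  simp [partialEval_eq_sum, ← smul_eq_C_mul]

instance finiteDimensional_restrictSupport (s : Finset (σ →₀ ℕ)) :
    FiniteDimensional K (restrictSupport K (s : Set (σ →₀ ℕ))) :=
  Module.Finite.of_basis (basisRestrictSupport K _)

abbrev CoordRing (S : Set (Fin n → K)) : Type _ := MvPolynomial (Fin n) K ⧸ vanishingIdeal K S

namespace CoordRing

variable {S : Set (Fin n → K)}

abbrev mk (S : Set (Fin n → K)) : MvPolynomial (Fin n) K →ₐ[K] CoordRing S :=
  Ideal.Quotient.mkₐ K _

theorem mk_eq_zero_iff {p : MvPolynomial (Fin n) K} : mk S p = 0 ↔ ∀ y ∈ S, eval y p = 0 :=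
  Ideal.Quotient.eq_zero_iff_mem

theorem mk_eq_mk_iff {p q : MvPolynomial (Fin n) K} :
    mk S p = mk S q ↔ ∀ y ∈ S, eval y p = eval y q := by
  rw [← sub_eq_zero, ← map_sub, mk_eq_zero_iff]
  simp only [map_sub, sub_eq_zero]

def evalAt {y : Fin n → K} (hy : y ∈ S) : CoordRing S →ₐ[K] K :=
  Ideal.Quotient.liftₐ _ (aeval y) fun _ hp => mem_vanishingIdeal_iff.mp hp y hy

@[simp]
theorem evalAt_mk {y : Fin n → K} (hy : y ∈ S) (p : MvPolynomial (Fin n) K) :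
    evalAt hy (mk S p) = eval y p :=
  rfl

theorem eq_of_evalAt_eq {y y' : Fin n → K} (hy : y ∈ S) (hy' : y' ∈ S)
    (h : evalAt hy = evalAt hy') :
    y = y' := by
  funext j
  simpa only [evalAt_mk, eval_X] using DFunLike.congr_fun h (mk S (X j))

theorem exists_evalAt_eq (hS : IsAlgebraicSet S) (χ : CoordRing S →ₐ[K] K) :
    ∃ y, ∃ hy : y ∈ S, evalAt hy = χ := by
  set y : Fin n → K := fun j => χ (mk S (X j))
  have hχ : ∀ p, χ (mk S p) = eval y p := fun p => by
    rw [← coe_aeval_eq_eval, ← AlgHom.comp_apply, aeval_unique (χ.comp (mk S))]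
    rfl
  obtain ⟨E, hE⟩ := hS
  have hy : y ∈ S := by
    rw [hE]
    intro p hp
    rw [← hχ, mk_eq_zero_iff.mpr fun x hx => (hE ▸ hx :) p hp, map_zero]
  exact ⟨y, hy, Ideal.Quotient.algHom_ext _ (AlgHom.ext fun p => (hχ p).symm)⟩

def comap (Q : Fin n → MvPolynomial (Fin n) K) (hQ : MapsTo (polyMap Q) S S) :
    CoordRing S →ₐ[K] CoordRing S :=
  Ideal.Quotient.liftₐ _ ((mk S).comp (bind₁ Q)) fun p hp => mk_eq_zero_iff.mpr fun y hy =>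
    (eval_bind₁_eq_eval_polyMap Q p y).trans (mem_vanishingIdeal_iff.mp hp _ (hQ hy))

variable {Q Q' Q'' : Fin n → MvPolynomial (Fin n) K} {hQ : MapsTo (polyMap Q) S S}
  {hQ' : MapsTo (polyMap Q') S S} {hQ'' : MapsTo (polyMap Q'') S S}

theorem evalAt_comp_comap {y : Fin n → K} (hy : y ∈ S) :
    (evalAt hy).comp (comap Q hQ) = evalAt (hQ hy) :=
  Ideal.Quotient.algHom_ext _ <| AlgHom.ext fun p => eval_bind₁_eq_eval_polyMap Q p y

theorem comap_comp_comap (h : EqOn (polyMap Q'') (polyMap Q' ∘ polyMap Q) S) :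
    (comap Q hQ).comp (comap Q' hQ') = comap Q'' hQ'' :=
  Ideal.Quotient.algHom_ext _ <| AlgHom.ext fun p => mk_eq_mk_iff.mpr fun y hy => by
    show eval y (bind₁ Q (bind₁ Q' p)) = eval y (bind₁ Q'' p)
    simp only [eval_bind₁_eq_eval_polyMap, h hy, comp_apply]

theorem comap_eq_id (h : EqOn (polyMap Q) id S) : comap Q hQ = AlgHom.id K _ :=
  Ideal.Quotient.algHom_ext _ <| AlgHom.ext fun p => mk_eq_mk_iff.mpr fun y hy =>
    (eval_bind₁_eq_eval_polyMap Q p y).trans (by rw [h hy, id])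

theorem bijOn_of_surjective_comap (hS : IsAlgebraicSet S) (h : Surjective (comap Q hQ)) :
    BijOn (polyMap Q) S S := by
  have hinj :=
    (comap Q hQ : CoordRing S →+* CoordRing S).injective_of_surjective_of_isNoetherianRing h
  refine ⟨hQ, fun y hy y' hy' hyy' => eq_of_evalAt_eq hy hy' ?_, fun z hz => ?_⟩
  · refine AlgHom.ext fun r => ?_
    obtain ⟨r, rfl⟩ := h r
    rw [← AlgHom.comp_apply, evalAt_comp_comap, ← AlgHom.comp_apply, evalAt_comp_comap]
    simp only [hyy']
  · let θ := AlgEquiv.ofBijective (comap Q hQ) ⟨hinj, h⟩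
    obtain ⟨y, hy, hχ⟩ := exists_evalAt_eq hS ((evalAt hz).comp θ.symm.toAlgHom)
    refine ⟨y, hy, eq_of_evalAt_eq (hQ hy) hz ?_⟩
    rw [← evalAt_comp_comap hy, hχ]
    ext r
    show evalAt hz (θ.symm (θ r)) = _
    rw [θ.symm_apply_apply]

end CoordRing

theorem exists_poly_bijOn_mul_right {S : Set (Fin n → K)} (hS : IsAlgebraicSet S)
    {μ : (Fin n → K) → (Fin n → K) → (Fin n → K)} (hμ : IsPolyMap₂ μ)
    (hmem : ∀ x ∈ S, ∀ y ∈ S, μ x y ∈ S) {e : Fin n → K} (he : e ∈ S)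
    (hid : ∀ y ∈ S, μ y e = y)
    (hassoc : ∀ x ∈ S, ∀ y ∈ S, ∀ z ∈ S, μ (μ x y) z = μ x (μ y z)) :
    ∃ D : MvPolynomial (Fin n) K, eval e D ≠ 0 ∧ ∀ x ∈ S, eval x D ≠ 0 → BijOn (μ · x) S S := by
  choose P hP using hμ
  let Q : (Fin n → K) → Fin n → MvPolynomial (Fin n) K := fun x j => partialEval x (P j)
  have hQ : ∀ x, polyMap (Q x) = (μ · x) := fun x => by
    funext y j
    simp [Q, polyMap, eval_partialEval, hP]
  have hmaps : ∀ x ∈ S, MapsTo (polyMap (Q x)) S S := fun x hx y hy => by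
    rw [hQ]
    exact hmem y hy x hx
  let θ : S → CoordRing S →ₐ[K] CoordRing S := fun x => CoordRing.comap (Q x) (hmaps x x.2)
  have ht : Algebra.adjoin K (range (CoordRing.mk S ∘ X)) = ⊤ := by
    rw [range_comp, ← AlgHom.map_adjoin, adjoin_range_X, Algebra.map_top, AlgHom.range_eq_top]
    exact Ideal.Quotient.mkₐ_surjective K _
  have hθe : θ ⟨e, he⟩ = AlgHom.id K _ :=
    CoordRing.comap_eq_id fun y hy => by rw [hQ]; exact hid y hy
  have hcomp : ∀ x w, ∃ u, (θ x).comp (θ w) = θ u := fun x w =>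
    ⟨⟨μ x w, hmem x x.2 w w.2⟩, CoordRing.comap_comp_comap fun y hy => by
      simp only [hQ, comp_apply]
      exact (hassoc y hy x x.2 w w.2).symm⟩
  have hfin : ∃ W : Submodule K (CoordRing S), FiniteDimensional K W ∧
      ∀ x i, θ x ((CoordRing.mk S ∘ X) i) ∈ W := by
    let s : Finset (Fin n →₀ ℕ) := Finset.univ.biUnion fun j => (sumAlgEquiv K _ _ (P j)).support
    refine ⟨(restrictSupport K (s : Set (Fin n →₀ ℕ))).map (CoordRing.mk S).toLinearMap,
      inferInstance, fun x i => ?_⟩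
    have hmem : partialEval (x : Fin n → K) (P i) ∈ restrictSupport K (s : Set (Fin n →₀ ℕ)) :=
      restrictSupport_mono K (Finset.coe_subset.mpr (Finset.subset_biUnion_of_mem _
        (Finset.mem_univ i))) (partialEval_mem_restrictSupport _ (P i))
    show CoordRing.mk S (bind₁ (Q x) (X i)) ∈ _
    rw [bind₁_X_right]
    exact Submodule.mem_map.mpr ⟨_, hmem, rfl⟩
  have hpoly : ∀ v (ℓ : CoordRing S →ₗ[K] K), ∃ F : MvPolynomial (Fin n) K,
      ∀ x : S, ℓ (θ x v) = eval (x : Fin n → K) F := by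
    intro v ℓ
    obtain ⟨p, rfl⟩ := Ideal.Quotient.mkₐ_surjective K _ v
    obtain ⟨F, hF⟩ :=
      exists_eval_eq_linearMap_partialEval (bind₁ P p) (ℓ ∘ₗ (CoordRing.mk S).toLinearMap)
    refine ⟨F, fun x => ?_⟩
    rw [← hF]
    show ℓ (CoordRing.mk S (bind₁ (Q x) p)) = _
    rw [bind₁_partialEval]
    rfl
  obtain ⟨D, hDe, hD⟩ :=
    exists_poly_surjective_of_eval_ne_zero ht Subtype.val θ ⟨e, he⟩ hθe hcomp hfin hpoly
  refine ⟨D, hDe, fun x hx hDx => ?_⟩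
  simpa only [hQ] using CoordRing.bijOn_of_surjective_comap hS (hD ⟨x, hx⟩ hDx)

theorem isOpen_setOf_eval_ne_zero (p : MvPolynomial (Fin n) K) :
    @IsOpen _ (zariskiTop K n) {x | eval x p ≠ 0} :=
  TopologicalSpace.isOpen_generateFrom_of_mem ⟨p, rfl⟩

end MvPolynomial

theorem IsPolyMap₂.exists_eval_eq_eval_apply_right {K : Type*} [Field K] {n m : ℕ}
    {f : (Fin n → K) → (Fin n → K) → (Fin m → K)} (hf : IsPolyMap₂ f) (x : Fin n → K)
    (D : MvPolynomial (Fin m) K) :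
    ∃ D' : MvPolynomial (Fin n) K, ∀ y, eval y D' = eval (f y x) D := by
  choose P hP using hf
  refine ⟨bind₁ (fun j => partialEval x (P j)) D, fun y => ?_⟩
  rw [eval_bind₁_eq_eval_polyMap]
  congr
  funext j
  rw [polyMap, eval_partialEval, hP]

namespace AlgebraicRing

variable {K : Type*} [Field K] (A : AlgebraicRing K) {a b : Fin A.n → K}

theorem add_neg_cancel (ha : a ∈ A.carrier) : A.add a (A.neg a) = A.zero := by
  rw [A.add_comm' a ha _ (A.neg_mem ha), A.neg_add_cancel' a ha]

theorem neg_add_cancel_right (ha : a ∈ A.carrier) (hb : b ∈ A.carrier) :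
    A.add (A.add a (A.neg b)) b = a := by
  rw [A.add_assoc' a ha _ (A.neg_mem hb) b hb, A.neg_add_cancel' b hb, A.add_zero' a ha]

theorem add_add_neg_cancel_left (ha : a ∈ A.carrier) (hb : b ∈ A.carrier) :
    A.add (A.add a b) (A.neg a) = b := by
  rw [A.add_comm' a ha b hb, A.add_assoc' b hb a ha _ (A.neg_mem ha), A.add_neg_cancel ha,
    A.add_zero' b hb]

theorem exists_poly_mem_units :
    ∃ D : MvPolynomial (Fin A.n) K, eval A.one D ≠ 0 ∧
      ∀ x ∈ A.carrier, eval x D ≠ 0 → x ∈ A.units := by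
  obtain ⟨D, hD1, hD⟩ := exists_poly_bijOn_mul_right A.carrier_closed A.mul_poly
    (fun x hx y hy => A.mul_mem hx hy) A.one_mem A.mul_one' A.mul_assoc'
  refine ⟨D, hD1, fun x hx hDx => ?_⟩
  have hbij := hD x hx hDx
  obtain ⟨a, ha, hax : A.mul a x = A.one⟩ := hbij.surjOn A.one_mem
  refine ⟨hx, a, ha, hbij.injOn (A.mul_mem hx ha) A.one_mem ?_, hax⟩
  show A.mul (A.mul x a) x = A.mul A.one x
  rw [A.mul_assoc' x hx a ha x hx, hax, A.mul_one' x hx, A.one_mul' x hx]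

end AlgebraicRing

end

theorem connected_algebraicRing_eq_units_sub_units_general (K : Type*) [Field K]
    (A : AlgebraicRing K)
    (hconn : @IsIrreducible _ (zariskiTop K A.n) A.carrier) :
    ∀ x ∈ A.carrier, ∃ u ∈ A.units, ∃ v ∈ A.units, x = A.add u (A.neg v) := by
  intro x hx
  obtain ⟨D, hD1, hD⟩ := A.exists_poly_mem_units
  obtain ⟨D', hD'⟩ := A.add_poly.exists_eval_eq_eval_apply_right x D
  have hD'1 : eval (A.add A.one (A.neg x)) D' ≠ 0 := by
    rwa [hD', A.neg_add_cancel_right A.one_mem hx]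
  obtain ⟨v, hv, hDv, hD'v⟩ := hconn.2 _ _ (isOpen_setOf_eval_ne_zero D)
    (isOpen_setOf_eval_ne_zero D') ⟨A.one, A.one_mem, hD1⟩
    ⟨_, A.add_mem A.one_mem (A.neg_mem hx), hD'1⟩
  refine ⟨A.add v x, hD _ (A.add_mem hv hx) ?_, v, hD v hv hDv,
    (A.add_add_neg_cancel_left hv hx).symm⟩
  rwa [← hD']

/-- In a connected (irreducible) algebraic ring over an algebraically
closed field, every element is a difference of two units: `A = A^× − A^×`. -/
theorem connected_algebraicRing_eq_units_sub_units (K : Type*) [Field K] [IsAlgClosed K]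
    (A : AlgebraicRing K)
    (hconn : @IsIrreducible _ (zariskiTop K A.n) A.carrier) :
    ∀ x ∈ A.carrier, ∃ u ∈ A.units, ∃ v ∈ A.units, x = A.add u (A.neg v) :=
  connected_algebraicRing_eq_units_sub_units_general K A hconn
end

section
/- Let K be an algebraically closed field of characteristic 0 and fix s distinct nonzero points a_1, …, a_s ∈ K^×. The ring homomorphism f: ℤ[X] → K^s, g(X) ↦ (g(a_1), …, g(a_s)), has Zariski-dense image in K^s (where K^s carries the product ring structure and the Zariski topology of affine s-space). -/
/-!
The values of the polynomials `∑_{k<s} c_k X^k` with `c ∈ ℤ^s` are the vectors `V c`, where `V` is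
the Vandermonde matrix `(a_i ^ k)`, invertible since the `a_i` are distinct. If a polynomial `p`
vanishes on them, then `p ∘ V` vanishes on the infinite box `ℤ^s` (characteristic `0`), so
`p ∘ V = 0` and hence `p = 0`: no nonempty basic open set `{p ≠ 0}` misses the image.
-/

open MvPolynomial

open Matrix

theorem isTopologicalBasis_zariskiTop (K : Type*) [Field K] (n : ℕ) :
    @TopologicalSpace.IsTopologicalBasis _ (zariskiTop K n)
      {U | ∃ p : MvPolynomial (Fin n) K, U = {x | eval x p ≠ 0}} := by
  let := zariskiTop K n
  have huniv : Set.univ ∈ {U | ∃ p : MvPolynomial (Fin n) K, U = {x | eval x p ≠ 0}} :=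
    ⟨1, by simp⟩
  have hbasis := TopologicalSpace.isTopologicalBasis_of_subbasis_of_inter
    (r := {U | ∃ p : MvPolynomial (Fin n) K, U = {x | eval x p ≠ 0}}) rfl <| by
      rintro _ ⟨p, rfl⟩ _ ⟨q, rfl⟩
      exact ⟨p * q, by ext x; simp⟩
  rwa [Set.insert_eq_of_mem huniv] at hbasis

theorem dense_zariskiTop_of_forall_eval_eq_zero {K : Type*} [Field K] {n : ℕ}
    {S : Set (Fin n → K)}
    (hS : ∀ p : MvPolynomial (Fin n) K, (∀ x ∈ S, eval x p = 0) → p = 0) :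
    @Dense _ (zariskiTop K n) S := by
  let := zariskiTop K n
  rw [(isTopologicalBasis_zariskiTop K n).dense_iff]
  rintro _ ⟨p, rfl⟩ ⟨x, hx⟩
  by_contra hdisj
  refine hx ?_
  rw [hS p fun y hy => ?_, map_zero]
  by_contra hpy
  exact hdisj ⟨y, hpy, hy⟩

theorem eval_bind₁_sum_C_mul_X {R σ τ : Type*} [CommRing R] [Fintype τ]
    (M : Matrix σ τ R) (p : MvPolynomial σ R) (c : τ → R) :
    eval c (bind₁ (fun i => ∑ k, C (M i k) * X k) p) = eval (M *ᵥ c) p := by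
  have hsubst : (fun i => eval c (∑ k, C (M i k) * X k)) = M *ᵥ c := by
    funext i
    simp [mulVec, dotProduct]
  rw [← hsubst]
  exact eval₂Hom_bind₁ (RingHom.id R) c _ p

theorem eq_zero_of_eval_mulVec_intCast_eq_zero {R σ : Type*} [CommRing R] [IsDomain R]
    [CharZero R] [Fintype σ] [DecidableEq σ] (M : Matrix σ σ R) (hM : IsUnit M.det)
    (p : MvPolynomial σ R) (hp : ∀ c : σ → ℤ, eval (M *ᵥ fun k => (c k : R)) p = 0) :
    p = 0 := by
  have hq : bind₁ (fun i => ∑ k, C (M i k) * X k) p = 0 := by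
    refine funext_set (fun _ => Set.range ((↑) : ℤ → R))
      (fun _ => Set.infinite_range_of_injective Int.cast_injective) fun x hx => ?_
    choose c hc using fun k => hx k (Set.mem_univ k)
    have hx' : x = fun k => (c k : R) := funext fun k => (hc k).symm
    rw [hx', eval_bind₁_sum_C_mul_X, hp, map_zero]
  refine MvPolynomial.funext fun x => ?_
  have hx : M *ᵥ (M⁻¹ *ᵥ x) = x := by
    rw [mulVec_mulVec, mul_nonsing_inv _ hM, one_mulVec]
  rw [← hx, ← eval_bind₁_sum_C_mul_X, hq, map_zero, map_zero]

theorem vandermonde_mulVec_intCast {R : Type*} [CommRing R] {n : ℕ} (a : Fin n → R)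
    (c : Fin n → ℤ) :
    vandermonde a *ᵥ (fun k => (c k : R)) =
      fun i => Polynomial.aeval (a i) (∑ k, Polynomial.C (c k) * Polynomial.X ^ (k : ℕ)) := by
  funext i
  simp [mulVec, dotProduct, mul_comm]

theorem evaluation_hom_dense_image_general (K : Type*) [Field K] [CharZero K]
    (s : ℕ) (a : Fin s → K) (hinj : Function.Injective a) :
    @Dense _ (zariskiTop K s)
      (Set.range fun g : Polynomial ℤ => fun i => Polynomial.aeval (a i) g) := by
  refine dense_zariskiTop_of_forall_eval_eq_zero fun p hp => ?_
  refine eq_zero_of_eval_mulVec_intCast_eq_zero (vandermonde a)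
    (det_vandermonde_ne_zero_iff.2 hinj).isUnit p fun c => ?_
  rw [vandermonde_mulVec_intCast]
  exact hp _ ⟨_, rfl⟩

/-- For distinct nonzero points `a 1, …, a s` of an algebraically
closed field `K` of characteristic `0`, the evaluation ring homomorphism
`ℤ[X] → K^s`, `g ↦ (g(a 1), …, g(a s))`, has Zariski-dense image. -/
theorem evaluation_hom_dense_image (K : Type*) [Field K] [IsAlgClosed K] [CharZero K]
    (s : ℕ) (a : Fin s → K) (hinj : Function.Injective a) (hne : ∀ i, a i ≠ 0) :
    @Dense _ (zariskiTop K s)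
      (Set.range fun g : Polynomial ℤ => fun i => Polynomial.aeval (a i) g) :=
  evaluation_hom_dense_image_general K s a hinj
end
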